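/- arXiv:1907.11579 — 6 statements merged into one kernel-verified Lean document; each statement's English description precedes it below -/
import Mathlib

section
/- Let p₁ and p₂ be real numbers with p₁ > p₂, and define ψ_p(ρ) := ∫₀^ρ (1 − r²)^p dr. Then the ratio ρ ↦ ψ_{p₁}(ρ)/ψ_{p₂}(ρ) is strictly decreasing on the interval (0,1). -/
open Set intervalIntegral

theorem stmt7 (p₁ p₂ : ℝ) (hp : p₁ > p₂) :
    StrictAntiOn
      (fun ρ : ℝ =>
        (∫ r in (0 : ℝ)..ρ, (1 - r ^ 2) ^ p₁) / (∫ r in (0 : ℝ)..ρ, (1 - r ^ 2) ^ p₂))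
      (Set.Ioo 0 1) := by
  have cont : ∀ p : ℝ, ∀ {x y : ℝ}, 0 ≤ x → y < 1 →
      ContinuousOn (fun r : ℝ => (1 - r ^ 2) ^ p) (Icc x y) := by
    intro p x y hx hy
    apply ContinuousOn.rpow_const (by fun_prop)
    intro r hr
    left
    have := hr.1; have := hr.2
    nlinarith
  have intg : ∀ p : ℝ, ∀ {x y : ℝ}, 0 ≤ x → y < 1 → x ≤ y →
      IntervalIntegrable (fun r : ℝ => (1 - r ^ 2) ^ p) MeasureTheory.volume x y := by
    intro p x y hx hy hxy
    exact (cont p hx hy).intervalIntegrable_of_Icc hxy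
  have pos : ∀ p : ℝ, ∀ {x y : ℝ}, 0 ≤ x → y < 1 → x < y →
      0 < ∫ r in x..y, (1 - r ^ 2) ^ p := by
    intro p x y hx hy hxy
    apply intervalIntegral_pos_of_pos_on (intg p hx hy hxy.le) _ hxy
    intro r hr
    apply Real.rpow_pos_of_pos
    nlinarith [hr.1, hr.2]
  intro a ha b hb hab
  obtain ⟨ha0, ha1⟩ := ha
  obtain ⟨hb0, hb1⟩ := hb
  set I₁ := ∫ r in (0:ℝ)..a, (1 - r ^ 2) ^ p₁ with hI₁
  set I₂ := ∫ r in (0:ℝ)..a, (1 - r ^ 2) ^ p₂ with hI₂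
  set J₁ := ∫ r in a..b, (1 - r ^ 2) ^ p₁ with hJ₁
  set J₂ := ∫ r in a..b, (1 - r ^ 2) ^ p₂ with hJ₂
  have hI₁pos : 0 < I₁ := pos p₁ le_rfl ha1 ha0
  have hI₂pos : 0 < I₂ := pos p₂ le_rfl ha1 ha0
  have hJ₂pos : 0 < J₂ := pos p₂ ha0.le hb1 hab
  have hsplit₁ : (∫ r in (0:ℝ)..b, (1 - r ^ 2) ^ p₁) = I₁ + J₁ :=
    (integral_add_adjacent_intervals (intg p₁ le_rfl ha1 ha0.le)
      (intg p₁ ha0.le hb1 hab.le)).symm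
  have hsplit₂ : (∫ r in (0:ℝ)..b, (1 - r ^ 2) ^ p₂) = I₂ + J₂ :=
    (integral_add_adjacent_intervals (intg p₂ le_rfl ha1 ha0.le)
      (intg p₂ ha0.le hb1 hab.le)).symm
  set c : ℝ := (1 - a ^ 2) ^ (p₁ - p₂) with hc
  have ha2 : (0:ℝ) < 1 - a ^ 2 := by nlinarith
  have hcpos : 0 < c := Real.rpow_pos_of_pos ha2 _
  -- pointwise identity
  have key : ∀ r : ℝ, 0 < 1 - r ^ 2 →
      (1 - r ^ 2) ^ p₁ = (1 - r ^ 2) ^ (p₁ - p₂) * (1 - r ^ 2) ^ p₂ := by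
    intro r hr
    rw [← Real.rpow_add hr]
    ring_nf
  -- I₁ ≥ c * I₂
  have hI : c * I₂ ≤ I₁ := by
    rw [hI₁, hI₂, ← integral_const_mul]
    apply integral_mono_on ha0.le ((intg p₂ le_rfl ha1 ha0.le).const_mul c)
      (intg p₁ le_rfl ha1 ha0.le)
    intro r hr
    have hr2 : (0:ℝ) < 1 - r ^ 2 := by nlinarith [hr.1, hr.2]
    rw [key r hr2]
    have : c ≤ (1 - r ^ 2) ^ (p₁ - p₂) := by
      apply Real.rpow_le_rpow ha2.le (by nlinarith [hr.1, hr.2]) (by linarith)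
    exact mul_le_mul_of_nonneg_right this (Real.rpow_pos_of_pos hr2 _).le
  -- J₁ < c * J₂
  have hJ : J₁ < c * J₂ := by
    rw [hJ₁, hJ₂, ← integral_const_mul]
    apply integral_lt_integral_of_continuousOn_of_le_of_exists_lt hab
      (cont p₁ ha0.le hb1) ((cont p₂ ha0.le hb1).const_smul c)
    · intro r hr
      have hr2 : (0:ℝ) < 1 - r ^ 2 := by nlinarith [hr.1.le, hr.2]
      rw [key r hr2]
      have : (1 - r ^ 2) ^ (p₁ - p₂) ≤ c := by
        apply Real.rpow_le_rpow hr2.le (by nlinarith [hr.1.le, ha0.le]) (by linarith)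
      exact mul_le_mul_of_nonneg_right this (Real.rpow_pos_of_pos hr2 _).le
    · refine ⟨(a + b) / 2, ⟨by linarith, by linarith⟩, ?_⟩
      have hm1 : a < (a + b) / 2 := by linarith
      have hm2 : (a + b) / 2 < b := by linarith
      have hr2 : (0:ℝ) < 1 - ((a + b) / 2) ^ 2 := by nlinarith
      rw [key _ hr2]
      have : (1 - ((a + b) / 2) ^ 2) ^ (p₁ - p₂) < c := by
        apply Real.rpow_lt_rpow hr2.le (by nlinarith [hm1, ha0]) (by linarith)
      exact mul_lt_mul_of_pos_right this (Real.rpow_pos_of_pos hr2 _)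
  simp only [hsplit₁, hsplit₂]
  rw [div_lt_div_iff₀ (by linarith) hI₂pos]
  nlinarith [mul_lt_mul_of_pos_right hJ hI₂pos,
    mul_le_mul_of_nonneg_left hI hJ₂pos.le]
end

section
/- Let ρ ∈ (−1,1), let Y and Y₁ be independent standard normal random variables, set Z := ρY + √(1−ρ²)·Y₁, write μ_{ij} := E[Y^i Z^j], and set σ² := (1−ρ²)². Then for every real z, Δ̃(z) = 48·ρ·(1−ρ²)³·(2z² − 1), where Δ̃(z) is defined from ρ, σ², z and the μ_{ij} as in the context. -/
open MeasureTheory ProbabilityTheory Real Set Nat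
open scoped ENNReal NNReal

noncomputable def gmom (n : ℕ) : ℝ := ∫ x : ℝ, x ^ n ∂(gaussianReal 0 1)

lemma integrable_pow_mul_gauss (n : ℕ) :
    Integrable (fun x : ℝ => x ^ n * Real.exp (-(1/2) * x ^ 2)) := by
  have hb : (0:ℝ) < 1/4 := by norm_num
  refine Integrable.mono' ((integrable_exp_neg_mul_sq hb).const_mul ((n ! : ℝ) * Real.exp 1)) ?_ ?_
  · exact ((measurable_id.pow_const n).mul
      (((measurable_id.pow_const 2).const_mul _).exp)).aestronglyMeasurable
  · refine Filter.Eventually.of_forall (fun x => ?_)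
    have h1 : |x| ^ n ≤ n ! * Real.exp |x| := by
      have := Real.pow_div_factorial_le_exp (x := |x|) (abs_nonneg x) n
      have hn : (0:ℝ) < n ! := by positivity
      calc |x| ^ n = (|x| ^ n / n !) * n ! := by field_simp
        _ ≤ Real.exp |x| * n ! := by
            exact mul_le_mul_of_nonneg_right this hn.le
        _ = n ! * Real.exp |x| := by ring
    have h2 : |x| ≤ (1/4) * x ^ 2 + 1 := by
      nlinarith [sq_nonneg (|x| - 2), sq_abs x, abs_nonneg x]
    have h3 : Real.exp |x| ≤ Real.exp 1 * Real.exp (1/4 * x ^ 2) := by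
      rw [← Real.exp_add]
      exact Real.exp_le_exp.mpr (by linarith)
    have hxn : ‖x ^ n * Real.exp (-(1/2) * x ^ 2)‖ = |x| ^ n * Real.exp (-(1/2) * x^2) := by
      rw [norm_mul, Real.norm_eq_abs, Real.norm_eq_abs, abs_pow,
        abs_of_pos (Real.exp_pos _)]
    rw [hxn]
    have : |x| ^ n * Real.exp (-(1/2) * x ^ 2)
        ≤ (n ! * Real.exp 1 * Real.exp (1/4 * x^2)) * Real.exp (-(1/2) * x ^ 2) := by
      refine mul_le_mul_of_nonneg_right ?_ (Real.exp_pos _).le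
      calc |x| ^ n ≤ n ! * Real.exp |x| := h1
        _ ≤ n ! * (Real.exp 1 * Real.exp (1/4 * x^2)) := by
            exact mul_le_mul_of_nonneg_left h3 (by positivity)
        _ = n ! * Real.exp 1 * Real.exp (1/4 * x^2) := by ring
    refine this.trans (le_of_eq ?_)
    rw [mul_assoc, ← Real.exp_add]
    ring_nf

noncomputable def Jg (n : ℕ) : ℝ := ∫ x : ℝ, x ^ n * Real.exp (-(1/2) * x ^ 2)

lemma Jg_zero : Jg 0 = Real.sqrt (2 * π) := by
  have := integral_gaussian (1/2)
  simp only [Jg, pow_zero, one_mul]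
  rw [this, show π / (1/2 : ℝ) = 2 * π by ring]

lemma Jg_odd (n : ℕ) (hn : Odd n) : Jg n = 0 := by
  have hmp : MeasurePreserving (fun x : ℝ => -x) volume volume :=
    Measure.measurePreserving_neg _
  have hme : MeasurableEmbedding (fun x : ℝ => -x) :=
    (Homeomorph.neg ℝ).measurableEmbedding
  have h := hmp.integral_comp hme (fun x : ℝ => x ^ n * Real.exp (-(1/2) * x ^ 2))
  have h2 : ∫ x : ℝ, (-x) ^ n * Real.exp (-(1/2) * (-x) ^ 2) = - Jg n := by
    rw [show (fun x : ℝ => (-x) ^ n * Real.exp (-(1/2) * (-x) ^ 2))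
        = fun x : ℝ => -(x ^ n * Real.exp (-(1/2) * x ^ 2)) by
      funext x; rw [hn.neg_pow, neg_sq]; ring]
    rw [integral_neg]; rfl
  rw [h2] at h
  simp only [Jg] at *
  linarith

lemma tendsto_pow_gauss_atTop (m : ℕ) :
    Filter.Tendsto (fun x : ℝ => x ^ m * Real.exp (-(1/2) * x ^ 2))
      Filter.atTop (nhds 0) := by
  have h := rpow_mul_exp_neg_mul_sq_isLittleO_exp_neg (by norm_num : (0:ℝ) < 1/2) (m : ℝ)
  have key : Filter.Tendsto (fun x : ℝ => Real.exp (-(1/2) * x)) Filter.atTop (nhds 0) := by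
    have := Real.tendsto_exp_neg_atTop_nhds_zero.comp
      ((Filter.tendsto_id (α := ℝ)).const_mul_atTop (by norm_num : (0:ℝ) < 1/2))
    refine this.congr (fun x => ?_)
    simp [Function.comp, neg_mul]
  have h2 := h.trans_tendsto key
  refine h2.congr' ?_
  filter_upwards [Filter.eventually_gt_atTop (0:ℝ)] with x hx
  rw [Real.rpow_natCast]

lemma tendsto_pow_gauss_atBot (m : ℕ) :
    Filter.Tendsto (fun x : ℝ => x ^ m * Real.exp (-(1/2) * x ^ 2))
      Filter.atBot (nhds 0) := by
  have h := (tendsto_pow_gauss_atTop m).comp Filter.tendsto_neg_atBot_atTop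
  have h2 : Filter.Tendsto (fun x : ℝ => (-x) ^ m * Real.exp (-(1/2) * x ^ 2))
      Filter.atBot (nhds 0) := by
    refine h.congr (fun x => ?_)
    simp only [Function.comp]
    rw [neg_sq]
  rcases Nat.even_or_odd m with hm | hm
  · refine h2.congr (fun x => ?_)
    rw [hm.neg_pow]
  · have := h2.neg
    rw [neg_zero] at this
    refine this.congr (fun x => ?_)
    rw [hm.neg_pow]; ring

lemma Jg_rec (n : ℕ) : Jg (n + 2) = (n + 1) * Jg n := by
  set F : ℝ → ℝ := fun x => x ^ (n+1) * Real.exp (-(1/2) * x ^ 2) with hF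
  set G : ℝ → ℝ := fun x => (n+1) * (x ^ n * Real.exp (-(1/2) * x ^ 2))
      - x ^ (n+2) * Real.exp (-(1/2) * x ^ 2) with hG
  have hderiv : ∀ x : ℝ, HasDerivAt F (G x) x := by
    intro x
    have h1 : HasDerivAt (fun x : ℝ => x ^ (n+1)) ((n+1) * x ^ n) x := by
      simpa using hasDerivAt_pow (n+1) x
    have h2 : HasDerivAt (fun x : ℝ => Real.exp (-(1/2) * x ^ 2))
        (Real.exp (-(1/2) * x ^ 2) * (-(1/2) * (2 * x))) x := by
      have hinner : HasDerivAt (fun x : ℝ => -(1/2) * x ^ 2) (-(1/2) * (2 * x)) x := by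
        simpa using ((hasDerivAt_pow 2 x).const_mul (-(1/2 : ℝ)))
      exact hinner.exp
    have : HasDerivAt (fun x : ℝ => x ^ (n+1) * Real.exp (-(1/2) * x ^ 2))
        ((n+1) * x ^ n * Real.exp (-(1/2) * x ^ 2)
          + x ^ (n+1) * (Real.exp (-(1/2) * x ^ 2) * (-(1/2) * (2 * x)))) x := h1.mul h2
    convert this using 1
    simp only [hG]
    ring
  have hInt : Integrable G :=
    ((integrable_pow_mul_gauss n).const_mul _).sub (integrable_pow_mul_gauss (n+2))
  have htop := integral_Ioi_of_hasDerivAt_of_tendsto' (a := 0)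
    (fun x _ => hderiv x) hInt.integrableOn (tendsto_pow_gauss_atTop (n+1))
  have hbot := integral_Iic_of_hasDerivAt_of_tendsto' (a := 0)
    (fun x _ => hderiv x) hInt.integrableOn (tendsto_pow_gauss_atBot (n+1))
  have hsum : ∫ x : ℝ, G x = 0 := by
    rw [← intervalIntegral.integral_Iic_add_Ioi hInt.integrableOn hInt.integrableOn, htop, hbot]
    ring
  have hlin : ∫ x : ℝ, G x = (n+1) * Jg n - Jg (n+2) := by
    rw [hG]
    rw [integral_sub (((integrable_pow_mul_gauss n).const_mul _)) (integrable_pow_mul_gauss (n+2))]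
    rw [integral_const_mul]
    rfl
  rw [hlin] at hsum
  linarith

lemma sqrt_two_pi_pos : (0:ℝ) < Real.sqrt (2 * π) := Real.sqrt_pos.mpr (by positivity)

lemma gaussianPDFReal_zero_one (x : ℝ) :
    gaussianPDFReal 0 1 x = (Real.sqrt (2 * π))⁻¹ * Real.exp (-(1/2) * x ^ 2) := by
  simp only [gaussianPDFReal, NNReal.coe_one, mul_one, sub_zero]
  congr 1
  ring

lemma gmom_eq (n : ℕ) : gmom n = (Real.sqrt (2 * π))⁻¹ * Jg n := by
  unfold gmom
  rw [gaussianReal_of_var_ne_zero 0 one_ne_zero]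
  rw [show gaussianPDF 0 1
      = fun x => ((Real.toNNReal (gaussianPDFReal 0 1 x) : ℝ≥0) : ℝ≥0∞) from rfl]
  rw [integral_withDensity_eq_integral_smul
    ((measurable_gaussianPDFReal 0 1).real_toNNReal) (fun x => x ^ n)]
  have : ∀ x : ℝ, (Real.toNNReal (gaussianPDFReal 0 1 x)) • (x ^ n)
      = (Real.sqrt (2 * π))⁻¹ * (x ^ n * Real.exp (-(1/2) * x ^ 2)) := by
    intro x
    rw [NNReal.smul_def, smul_eq_mul, Real.coe_toNNReal _ (gaussianPDFReal_nonneg 0 1 x),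
      gaussianPDFReal_zero_one]
    ring
  simp_rw [this]
  rw [integral_const_mul]
  rfl

lemma integrable_pow_gaussianReal (n : ℕ) :
    Integrable (fun x : ℝ => x ^ n) (gaussianReal 0 1) := by
  rw [gaussianReal_of_var_ne_zero 0 one_ne_zero]
  rw [show gaussianPDF 0 1
      = fun x => ((Real.toNNReal (gaussianPDFReal 0 1 x) : ℝ≥0) : ℝ≥0∞) from rfl]
  rw [integrable_withDensity_iff_integrable_smul
    ((measurable_gaussianPDFReal 0 1).real_toNNReal)]
  refine (((integrable_pow_mul_gauss n).const_mul ((Real.sqrt (2 * π))⁻¹)).congr ?_)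
  refine Filter.Eventually.of_forall (fun x => ?_)
  show (Real.sqrt (2 * π))⁻¹ * (x ^ n * Real.exp (-(1/2) * x ^ 2))
      = (Real.toNNReal (gaussianPDFReal 0 1 x)) • x ^ n
  rw [NNReal.smul_def, smul_eq_mul, Real.coe_toNNReal _ (gaussianPDFReal_nonneg 0 1 x),
    gaussianPDFReal_zero_one]
  ring

lemma gmom_vals : gmom 0 = 1 ∧ gmom 1 = 0 ∧ gmom 2 = 1 ∧ gmom 3 = 0 ∧ gmom 4 = 3
    ∧ gmom 5 = 0 ∧ gmom 6 = 15 := by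
  have h0 : Jg 0 = Real.sqrt (2 * π) := Jg_zero
  have h2 : Jg 2 = Real.sqrt (2 * π) := by
    have := Jg_rec 0; rw [h0] at this; simpa using this
  have h4 : Jg 4 = 3 * Real.sqrt (2 * π) := by
    have := Jg_rec 2; rw [h2] at this; norm_num at this ⊢; linarith
  have h6 : Jg 6 = 15 * Real.sqrt (2 * π) := by
    have := Jg_rec 4; rw [h4] at this; norm_num at this ⊢; linarith
  have hs := sqrt_two_pi_pos
  have hinv : (Real.sqrt (2 * π))⁻¹ * Real.sqrt (2 * π) = 1 := inv_mul_cancel₀ hs.ne'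
  have godd : ∀ n, Odd n → gmom n = 0 := fun n hn => by
    rw [gmom_eq, Jg_odd n hn, mul_zero]
  refine ⟨?_, godd 1 ⟨0, by norm_num⟩, ?_, godd 3 ⟨1, by norm_num⟩, ?_, godd 5 ⟨2, by norm_num⟩, ?_⟩
  · rw [gmom_eq, h0]; exact hinv
  · rw [gmom_eq, h2]; exact hinv
  · rw [gmom_eq, h4]; linear_combination 3 * hinv
  · rw [gmom_eq, h6]; linear_combination 15 * hinv

theorem stmt10 {Ω : Type*} [MeasurableSpace Ω] (μ : Measure Ω) [IsProbabilityMeasure μ]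
    (ρ : ℝ) (hρ : ρ ∈ Set.Ioo (-1 : ℝ) 1)
    (Y Y₁ : Ω → ℝ) (hY : Measurable Y) (hY₁ : Measurable Y₁)
    (hind : IndepFun Y Y₁ μ)
    (hYlaw : Measure.map Y μ = gaussianReal 0 1)
    (hY₁law : Measure.map Y₁ μ = gaussianReal 0 1)
    (Z : Ω → ℝ) (hZ : ∀ ω, Z ω = ρ * Y ω + Real.sqrt (1 - ρ ^ 2) * Y₁ ω)
    (μm : ℕ → ℕ → ℝ) (hμm : ∀ i j, μm i j = ∫ ω, Y ω ^ i * Z ω ^ j ∂μ)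
    (σ2 : ℝ) (hσ2 : σ2 = (1 - ρ ^ 2) ^ 2) :
    ∀ z : ℝ,
      16 * ((z ^ 2 - 1) * (6 * μm 1 2 * μm 2 1 - μm 3 3)
            + 3 * σ2 * z ^ 2 * (μm 1 3 + μm 3 1))
        - 12 * ρ * ((z ^ 2 - 1) * (4 * μm 0 3 * μm 2 1 + 4 * μm 1 2 * μm 3 0
              + 8 * (μm 1 2) ^ 2 - 2 * μm 1 3 * μm 3 1 + (μm 1 3) ^ 2
              + 8 * (μm 2 1) ^ 2 - 2 * μm 2 4 + (μm 3 1) ^ 2 - 2 * μm 4 2)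
            + σ2 * ((2 * z ^ 2 + 1) * (μm 0 4 + μm 4 0) + (4 * z ^ 2 - 2) * μm 2 2))
        + 12 * ρ ^ 2 * (z ^ 2 - 1) * (2 * μm 0 3 * (3 * μm 1 2 + μm 3 0)
            + μm 0 4 * (μm 1 3 - μm 3 1) + 10 * μm 1 2 * μm 2 1 - μm 1 3 * μm 4 0
            - μm 1 5 + 6 * μm 2 1 * μm 3 0 + μm 3 1 * μm 4 0 - 2 * μm 3 3 - μm 5 1)
        - ρ ^ 3 * (z ^ 2 - 1) * (24 * μm 0 3 * μm 2 1 + 12 * (μm 0 3) ^ 2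
            - 6 * μm 0 4 * μm 4 0 + 3 * (μm 0 4) ^ 2 - 2 * μm 0 6
            + 24 * μm 1 2 * μm 3 0 + 12 * (μm 1 2) ^ 2 + 12 * (μm 2 1) ^ 2
            - 6 * μm 2 4 + 12 * (μm 3 0) ^ 2 + 3 * (μm 4 0) ^ 2 - 6 * μm 4 2
            - 2 * μm 6 0)
      = 48 * ρ * (1 - ρ ^ 2) ^ 3 * (2 * z ^ 2 - 1) := by
  intro z
  obtain ⟨g0, g1, g2, g3, g4, g5, g6⟩ := gmom_vals
  set s : ℝ := Real.sqrt (1 - ρ ^ 2) with hs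
  have h1ρ : (0:ℝ) ≤ 1 - ρ ^ 2 := by nlinarith [hρ.1, hρ.2]
  have hs2 : s ^ 2 = 1 - ρ ^ 2 := Real.sq_sqrt h1ρ
  have hmom : ∀ (X : Ω → ℝ), Measurable X → Measure.map X μ = gaussianReal 0 1 →
      ∀ a : ℕ, ∫ ω, X ω ^ a ∂μ = gmom a := by
    intro X hX hlaw a
    have hmeas : AEStronglyMeasurable (fun x : ℝ => x ^ a) (Measure.map X μ) :=
      (measurable_id.pow_const a).aestronglyMeasurable
    rw [show gmom a = ∫ x : ℝ, x ^ a ∂(gaussianReal 0 1) from rfl, ← hlaw,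
      integral_map hX.aemeasurable hmeas]
  have hintX : ∀ (X : Ω → ℝ), Measurable X → Measure.map X μ = gaussianReal 0 1 →
      ∀ a : ℕ, Integrable (fun ω => X ω ^ a) μ := by
    intro X hX hlaw a
    have h : Integrable (fun x : ℝ => x ^ a) (Measure.map X μ) := by
      rw [hlaw]; exact integrable_pow_gaussianReal a
    exact (integrable_map_measure (measurable_id.pow_const a).aestronglyMeasurable
      hX.aemeasurable).mp h
  have hindab : ∀ a b : ℕ, IndepFun (fun ω => Y ω ^ a) (fun ω => Y₁ ω ^ b) μ :=
    fun a b => hind.comp (measurable_id.pow_const a) (measurable_id.pow_const b)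
  have hprodInt : ∀ a b : ℕ, Integrable (fun ω => Y ω ^ a * Y₁ ω ^ b) μ := by
    intro a b
    have := (hindab a b).integrable_mul (hintX Y hY hYlaw a) (hintX Y₁ hY₁ hY₁law b)
    exact this
  have hprod : ∀ a b : ℕ, ∫ ω, Y ω ^ a * Y₁ ω ^ b ∂μ = gmom a * gmom b := by
    intro a b
    have h := (hindab a b).integral_mul_eq_mul_integral (hY.pow_const a).aestronglyMeasurable
      (hY₁.pow_const b).aestronglyMeasurable
    have h2 : ∫ ω, Y ω ^ a * Y₁ ω ^ b ∂μ = (∫ ω, Y ω ^ a ∂μ) * ∫ ω, Y₁ ω ^ b ∂μ := h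
    rw [h2, hmom Y hY hYlaw a, hmom Y₁ hY₁ hY₁law b]
  have hmu : ∀ i j : ℕ, μm i j = ∑ k ∈ Finset.range (j+1),
      (j.choose k : ℝ) * ρ ^ k * s ^ (j - k) * (gmom (i + k) * gmom (j - k)) := by
    intro i j
    rw [hμm i j]
    have hpt : (fun ω => Y ω ^ i * Z ω ^ j) = fun ω => ∑ k ∈ Finset.range (j+1),
        (j.choose k : ℝ) * ρ ^ k * s ^ (j - k) * (Y ω ^ (i + k) * Y₁ ω ^ (j - k)) := by
      funext ω
      rw [hZ ω, add_pow, Finset.mul_sum]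
      refine Finset.sum_congr rfl (fun k hk => ?_)
      rw [mul_pow, mul_pow, pow_add]
      ring
    rw [hpt, integral_finset_sum _ (fun k _ => (hprodInt (i+k) (j-k)).const_mul _)]
    refine Finset.sum_congr rfl (fun k _ => ?_)
    rw [MeasureTheory.integral_const_mul, hprod]
  have e12 : μm 1 2 = 0 := by
    rw [hmu]; norm_num [Finset.sum_range_succ, Nat.choose, g0, g1, g2, g3]
  have e21 : μm 2 1 = 0 := by
    rw [hmu]; norm_num [Finset.sum_range_succ, Nat.choose, g0, g1, g2, g3]
  have e03 : μm 0 3 = 0 := by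
    rw [hmu]; norm_num [Finset.sum_range_succ, Nat.choose, g0, g1, g2, g3]
  have e30 : μm 3 0 = 0 := by
    rw [hmu]; norm_num [Finset.sum_range_succ, Nat.choose, g0, g1, g2, g3]
  have e31 : μm 3 1 = 3 * ρ := by
    rw [hmu]; norm_num [Finset.sum_range_succ, Nat.choose, g0, g1, g3, g4]
    try ring
  have e40 : μm 4 0 = 3 := by
    rw [hmu]; norm_num [Finset.sum_range_succ, Nat.choose, g0, g4]
    try ring
  have e51 : μm 5 1 = 15 * ρ := by
    rw [hmu]; norm_num [Finset.sum_range_succ, Nat.choose, g0, g1, g5, g6]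
    try ring
  have e60 : μm 6 0 = 15 := by
    rw [hmu]; norm_num [Finset.sum_range_succ, Nat.choose, g0, g6]
    try ring
  have e33 : μm 3 3 = 9 * ρ * (1 - ρ ^ 2) + 15 * ρ ^ 3 := by
    rw [hmu]; norm_num [Finset.sum_range_succ, Nat.choose, g0, g1, g2, g3, g4, g5, g6]
    try ring
    try linear_combination (9 * ρ) * hs2
  have e13 : μm 1 3 = 3 * ρ * (1 - ρ ^ 2) + 3 * ρ ^ 3 := by
    rw [hmu]; norm_num [Finset.sum_range_succ, Nat.choose, g0, g1, g2, g3, g4]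
    try ring
    try linear_combination (3 * ρ) * hs2
  have e24 : μm 2 4 = 3 * (1 - ρ ^ 2) ^ 2 + 18 * ρ ^ 2 * (1 - ρ ^ 2) + 15 * ρ ^ 4 := by
    rw [hmu]; norm_num [Finset.sum_range_succ, Nat.choose, g0, g1, g2, g3, g4, g5, g6]
    try ring
    try linear_combination (3 * s ^ 2 + 3 * (1 - ρ ^ 2) + 18 * ρ ^ 2) * hs2
  have e42 : μm 4 2 = 3 * (1 - ρ ^ 2) + 15 * ρ ^ 2 := by
    rw [hmu]; norm_num [Finset.sum_range_succ, Nat.choose, g0, g1, g2, g4, g5, g6]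
    try ring
    try linear_combination 3 * hs2
  have e04 : μm 0 4 = 3 * (1 - ρ ^ 2) ^ 2 + 6 * ρ ^ 2 * (1 - ρ ^ 2) + 3 * ρ ^ 4 := by
    rw [hmu]; norm_num [Finset.sum_range_succ, Nat.choose, g0, g1, g2, g3, g4]
    try ring
    try linear_combination (3 * s ^ 2 + 3 * (1 - ρ ^ 2) + 6 * ρ ^ 2) * hs2
  have e22 : μm 2 2 = (1 - ρ ^ 2) + 3 * ρ ^ 2 := by
    rw [hmu]; norm_num [Finset.sum_range_succ, Nat.choose, g0, g1, g2, g3, g4]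
    try ring
    try linear_combination hs2
  have e15 : μm 1 5 = 15 * ρ * (1 - ρ ^ 2) ^ 2 + 30 * ρ ^ 3 * (1 - ρ ^ 2) + 15 * ρ ^ 5 := by
    rw [hmu]; norm_num [Finset.sum_range_succ, Nat.choose, g0, g1, g2, g3, g4, g5, g6]
    try ring
    try linear_combination (15 * ρ * s ^ 2 + 15 * ρ * (1 - ρ ^ 2) + 30 * ρ ^ 3) * hs2
  have e06 : μm 0 6 = 15 * (1 - ρ ^ 2) ^ 3 + 45 * ρ ^ 2 * (1 - ρ ^ 2) ^ 2
      + 45 * ρ ^ 4 * (1 - ρ ^ 2) + 15 * ρ ^ 6 := by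
    rw [hmu]; norm_num [Finset.sum_range_succ, Nat.choose, g0, g1, g2, g3, g4, g5, g6]
    try ring
    try linear_combination (15 * s ^ 4 + 15 * s ^ 2 * (1 - ρ ^ 2) + 15 * (1 - ρ ^ 2) ^ 2
      + 45 * ρ ^ 2 * s ^ 2 + 45 * ρ ^ 2 * (1 - ρ ^ 2) + 45 * ρ ^ 4) * hs2
  rw [e12, e21, e33, e13, e31, e03, e30, e24, e42, e04, e40, e22, e15, e51, e06, e60, hσ2]
  ring
end

section
/- Let z_α > 1/√2, let ρ ∈ (−1,1) with ρ ≠ 0, and let z > 0. Then |(ρ/2)·(z²/z_α² − 1)| < |(ρ/2)·(2z² − 1)| if and only if z² > 2z_α²/(2z_α² + 1). -/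
theorem stmt13 (zα : ℝ) (hzα : 1 / Real.sqrt 2 < zα) (ρ : ℝ)
    (hρ : ρ ∈ Set.Ioo (-1 : ℝ) 1) (hρ0 : ρ ≠ 0) (z : ℝ) (hz : 0 < z) :
    |(ρ / 2) * (z ^ 2 / zα ^ 2 - 1)| < |(ρ / 2) * (2 * z ^ 2 - 1)| ↔
      z ^ 2 > 2 * zα ^ 2 / (2 * zα ^ 2 + 1) := by
  have hzα0 : 0 < zα := lt_trans (by positivity) hzα
  have hA : (1:ℝ)/2 < zα ^ 2 := by
    have h := pow_lt_pow_left₀ hzα (by positivity) (n := 2) two_ne_zero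
    rwa [div_pow, one_pow, Real.sq_sqrt (by norm_num : (0:ℝ) ≤ 2)] at h
  have hρ2 : 0 < |ρ / 2| := abs_pos.mpr (div_ne_zero hρ0 two_ne_zero)
  rw [abs_mul, abs_mul, mul_lt_mul_iff_right₀ hρ2, ← sq_lt_sq, gt_iff_lt,
    div_lt_iff₀ (by positivity)]
  have hzα2 : (zα:ℝ) ^ 2 ≠ 0 := by positivity
  rw [div_sub_one hzα2, div_pow, div_lt_iff₀ (by positivity)]
  have hf1 : (0:ℝ) < (2 * zα ^ 2 - 1) * z ^ 2 := mul_pos (by linarith) (pow_pos hz 2)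
  have hid : (2 * z ^ 2 - 1) ^ 2 * (zα ^ 2) ^ 2 - (z ^ 2 - zα ^ 2) ^ 2 =
      ((2 * zα ^ 2 - 1) * z ^ 2) * ((2 * zα ^ 2 + 1) * z ^ 2 - 2 * zα ^ 2) := by ring
  constructor
  · intro h
    nlinarith [hf1, hid, mul_pos hf1 hf1]
  · intro h
    have hf2 : (0:ℝ) < (2 * zα ^ 2 + 1) * z ^ 2 - 2 * zα ^ 2 := by linarith
    nlinarith [mul_pos hf1 hf2]
end

section
/- Let ρ ∈ (−1,1), let (Y,Z) be a random pair with the SquareV distribution with parameter ρ, write μ_{ij} := E[Y^i Z^j], and set σ² := 1 − ρ². Then for every real z, Δ̃(z) = 32·ρ·(1−ρ²)·(z² − 1), where Δ̃(z) is defined from ρ, σ², z and the μ_{ij} as in the context. -/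
open MeasureTheory

/-- The SquareV distribution with parameter `ρ`: a probability distribution on the
vertices of the square `[-1,1] × [-1,1]` assigning mass `(1+ρ)/4` to each of `(1,1)`
and `(-1,-1)`, and mass `(1-ρ)/4` to each of `(1,-1)` and `(-1,1)`. -/
noncomputable def squareV (ρ : ℝ) : Measure (ℝ × ℝ) :=
  ENNReal.ofReal ((1 + ρ) / 4) • Measure.dirac ((1 : ℝ), (1 : ℝ))
    + ENNReal.ofReal ((1 + ρ) / 4) • Measure.dirac ((-1 : ℝ), (-1 : ℝ))
    + ENNReal.ofReal ((1 - ρ) / 4) • Measure.dirac ((1 : ℝ), (-1 : ℝ))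
    + ENNReal.ofReal ((1 - ρ) / 4) • Measure.dirac ((-1 : ℝ), (1 : ℝ))

lemma momentV (ρ : ℝ) (hρ : ρ ∈ Set.Ioo (-1:ℝ) 1) (i j : ℕ) :
    ∫ p : ℝ × ℝ, p.1 ^ i * p.2 ^ j ∂(
      ENNReal.ofReal ((1 + ρ) / 4) • Measure.dirac ((1 : ℝ), (1 : ℝ))
    + ENNReal.ofReal ((1 + ρ) / 4) • Measure.dirac ((-1 : ℝ), (-1 : ℝ))
    + ENNReal.ofReal ((1 - ρ) / 4) • Measure.dirac ((1 : ℝ), (-1 : ℝ))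
    + ENNReal.ofReal ((1 - ρ) / 4) • Measure.dirac ((-1 : ℝ), (1 : ℝ)))
    = (1+ρ)/4 * (1 + (-1:ℝ)^(i+j)) + (1-ρ)/4 * ((-1:ℝ)^j + (-1:ℝ)^i) := by
  have h1 : (0:ℝ) ≤ (1+ρ)/4 := by nlinarith [hρ.1]
  have h2 : (0:ℝ) ≤ (1-ρ)/4 := by nlinarith [hρ.2]
  have hmeas : Measurable fun p : ℝ × ℝ => p.1 ^ i * p.2 ^ j := by measurability
  have hint : ∀ (a : ℝ × ℝ) (c : ℝ), Integrable (fun p : ℝ × ℝ => p.1 ^ i * p.2 ^ j)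
      (ENNReal.ofReal c • Measure.dirac a) := by
    intro a c
    have : Integrable (fun p : ℝ × ℝ => p.1 ^ i * p.2 ^ j) (Measure.dirac a) :=
      (integrable_const _).congr (ae_eq_dirac' (f := fun p : ℝ × ℝ => p.1 ^ i * p.2 ^ j) hmeas).symm
    exact this.smul_measure ENNReal.ofReal_ne_top
  rw [integral_add_measure (((hint _ _).add_measure (hint _ _)).add_measure (hint _ _)) (hint _ _),
      integral_add_measure ((hint _ _).add_measure (hint _ _)) (hint _ _),
      integral_add_measure (hint _ _) (hint _ _)]
  simp [integral_smul_measure, ENNReal.toReal_ofReal h1, ENNReal.toReal_ofReal h2,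
    integral_dirac' _ _ hmeas.stronglyMeasurable, mul_pow, pow_add]
  ring

theorem stmt16 {Ω : Type*} [MeasurableSpace Ω] (μ : Measure Ω) [IsProbabilityMeasure μ]
    (ρ : ℝ) (hρ : ρ ∈ Set.Ioo (-1 : ℝ) 1)
    (Y Z : Ω → ℝ) (hY : Measurable Y) (hZ : Measurable Z)
    (hlaw : Measure.map (fun ω => (Y ω, Z ω)) μ = squareV ρ)
    (μm : ℕ → ℕ → ℝ) (hμm : ∀ i j, μm i j = ∫ ω, Y ω ^ i * Z ω ^ j ∂μ)
    (σ2 : ℝ) (hσ2 : σ2 = 1 - ρ ^ 2) :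
    ∀ z : ℝ,
      16 * ((z ^ 2 - 1) * (6 * μm 1 2 * μm 2 1 - μm 3 3)
            + 3 * σ2 * z ^ 2 * (μm 1 3 + μm 3 1))
        - 12 * ρ * ((z ^ 2 - 1) * (4 * μm 0 3 * μm 2 1 + 4 * μm 1 2 * μm 3 0
              + 8 * (μm 1 2) ^ 2 - 2 * μm 1 3 * μm 3 1 + (μm 1 3) ^ 2
              + 8 * (μm 2 1) ^ 2 - 2 * μm 2 4 + (μm 3 1) ^ 2 - 2 * μm 4 2)
            + σ2 * ((2 * z ^ 2 + 1) * (μm 0 4 + μm 4 0) + (4 * z ^ 2 - 2) * μm 2 2))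
        + 12 * ρ ^ 2 * (z ^ 2 - 1) * (2 * μm 0 3 * (3 * μm 1 2 + μm 3 0)
            + μm 0 4 * (μm 1 3 - μm 3 1) + 10 * μm 1 2 * μm 2 1 - μm 1 3 * μm 4 0
            - μm 1 5 + 6 * μm 2 1 * μm 3 0 + μm 3 1 * μm 4 0 - 2 * μm 3 3 - μm 5 1)
        - ρ ^ 3 * (z ^ 2 - 1) * (24 * μm 0 3 * μm 2 1 + 12 * (μm 0 3) ^ 2
            - 6 * μm 0 4 * μm 4 0 + 3 * (μm 0 4) ^ 2 - 2 * μm 0 6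
            + 24 * μm 1 2 * μm 3 0 + 12 * (μm 1 2) ^ 2 + 12 * (μm 2 1) ^ 2
            - 6 * μm 2 4 + 12 * (μm 3 0) ^ 2 + 3 * (μm 4 0) ^ 2 - 6 * μm 4 2
            - 2 * μm 6 0)
      = 32 * ρ * (1 - ρ ^ 2) * (z ^ 2 - 1) := by
  have hm : ∀ i j : ℕ, μm i j
      = (1+ρ)/4 * (1 + (-1:ℝ)^(i+j)) + (1-ρ)/4 * ((-1:ℝ)^j + (-1:ℝ)^i) := by
    intro i j
    have hmeas : Measurable fun p : ℝ × ℝ => p.1 ^ i * p.2 ^ j := by measurability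
    have key := integral_map (μ := μ) (φ := fun ω => (Y ω, Z ω))
      (hY.prodMk hZ).aemeasurable hmeas.aestronglyMeasurable
    rw [hlaw, squareV] at key
    rw [hμm, ← key]
    exact momentV ρ hρ i j
  intro z
  simp only [hm]
  norm_num
  subst hσ2
  ring
end

section
/- For every real z ≠ 0, there exists ρ ∈ (−1,1) such that ∫₀^ρ (1 − r²)^{1/(3z²) − 1/3} dr ≠ (1/2)·ln((1+ρ)/(1−ρ)). -/
theorem stmt17 (z : ℝ) (hz : z ≠ 0) :
    ∃ ρ ∈ Set.Ioo (-1 : ℝ) 1,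
      (∫ r in (0 : ℝ)..ρ, (1 - r ^ 2) ^ (1 / (3 * z ^ 2) - 1 / 3)) ≠
        (1 / 2) * Real.log ((1 + ρ) / (1 - ρ)) := by
  set q : ℝ := 1 / (3 * z ^ 2) - 1 / 3 with hqdef
  have hz2 : 0 < 3 * z ^ 2 := by positivity
  have hq : -1 < q := by
    have : 0 < 1 / (3 * z ^ 2) := by positivity
    simp only [hqdef]; linarith
  refine ⟨1/2, by norm_num, ?_⟩
  -- antiderivative of (1-r²)⁻¹
  have hderiv : ∀ r ∈ Set.uIcc (0:ℝ) (1/2),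
      HasDerivAt (fun r => (1/2) * (Real.log (1+r) - Real.log (1-r))) ((1 - r^2)⁻¹) r := by
    intro r hr
    rw [Set.uIcc_of_le (by norm_num)] at hr
    have h1 : (0:ℝ) < 1 + r := by nlinarith [hr.1, hr.2]
    have h2 : (0:ℝ) < 1 - r := by nlinarith [hr.1, hr.2]
    have d1 : HasDerivAt (fun r : ℝ => Real.log (1+r)) (1/(1+r)) r := by
      have := ((hasDerivAt_id r).const_add (1:ℝ)).log h1.ne'
      simpa using this
    have d2 : HasDerivAt (fun r : ℝ => Real.log (1-r)) ((-1)/(1-r)) r := by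
      have := ((hasDerivAt_id r).const_sub (1:ℝ)).log h2.ne'
      simpa using this
    have := ((d1.sub d2).const_mul (1/2 : ℝ))
    refine this.congr_deriv ?_
    have h3 : (1 - r^2) ≠ 0 := by nlinarith
    field_simp
    ring
  have hint : (∫ r in (0:ℝ)..(1/2), (1 - r^2)⁻¹) = (1/2) * Real.log 3 := by
    rw [intervalIntegral.integral_eq_sub_of_hasDerivAt hderiv]
    · rw [show Real.log 3 = Real.log (3/2) - Real.log (1/2) by
        rw [← Real.log_div (by norm_num) (by norm_num)]; norm_num]
      norm_num
    · apply ContinuousOn.intervalIntegrable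
      apply ContinuousOn.inv₀
      · fun_prop
      · intro x hx
        rw [Set.uIcc_of_le (by norm_num)] at hx
        nlinarith [hx.1, hx.2]
  have hlt : (∫ r in (0:ℝ)..(1/2), (1 - r ^ 2) ^ q) <
      ∫ r in (0:ℝ)..(1/2), (1 - r^2)⁻¹ := by
    apply intervalIntegral.integral_lt_integral_of_continuousOn_of_le_of_exists_lt
      (by norm_num)
    · apply ContinuousOn.rpow_const
      · fun_prop
      · intro x hx
        left
        nlinarith [hx.1, hx.2]
    · apply ContinuousOn.inv₀
      · fun_prop
      · intro x hx
        nlinarith [hx.1, hx.2]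
    · intro x hx
      have h0 : (0:ℝ) < 1 - x^2 := by nlinarith [hx.1, hx.2]
      have h1 : 1 - x^2 < 1 := by nlinarith [hx.1, hx.2]
      have := (Real.rpow_lt_rpow_of_exponent_gt h0 h1 hq).le
      rwa [Real.rpow_neg_one] at this
    · refine ⟨1/2, by norm_num, ?_⟩
      have h0 : (0:ℝ) < 1 - (1/2:ℝ)^2 := by norm_num
      have h1 : (1:ℝ) - (1/2:ℝ)^2 < 1 := by norm_num
      have := Real.rpow_lt_rpow_of_exponent_gt h0 h1 hq
      rwa [Real.rpow_neg_one] at this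
  rw [hint] at hlt
  have : ((1:ℝ) + 1/2) / (1 - 1/2) = 3 := by norm_num
  rw [this]
  exact ne_of_lt hlt
end

section
/- Let z_α ≥ 1/√2, let ρ ∈ (−1,1) with ρ ≠ 0, and let z > 0. Then |(ρ/(3√(1−ρ²)))·(z²/z_α² − 1)| < |(ρ/(3√(1−ρ²)))·(2z² + 1)|. -/
theorem stmt18 (zα : ℝ) (hzα : 1 / Real.sqrt 2 ≤ zα) (ρ : ℝ)
    (hρ : ρ ∈ Set.Ioo (-1 : ℝ) 1) (hρ0 : ρ ≠ 0) (z : ℝ) (hz : 0 < z) :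
    |(ρ / (3 * Real.sqrt (1 - ρ ^ 2))) * (z ^ 2 / zα ^ 2 - 1)| <
      |(ρ / (3 * Real.sqrt (1 - ρ ^ 2))) * (2 * z ^ 2 + 1)| := by
  obtain ⟨h1, h2⟩ := hρ
  have hs : 0 < Real.sqrt (1 - ρ ^ 2) := Real.sqrt_pos.2 (by nlinarith)
  have hc : ρ / (3 * Real.sqrt (1 - ρ ^ 2)) ≠ 0 := by
    apply div_ne_zero hρ0; positivity
  rw [abs_mul, abs_mul]
  apply mul_lt_mul_of_pos_left _ (abs_pos.2 hc)
  have hzαpos : 0 < zα := lt_of_lt_of_le (by positivity) hzα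
  have hzα2 : (1 : ℝ) / 2 ≤ zα ^ 2 := by
    have := Real.sq_sqrt (by norm_num : (2:ℝ) ≥ 0)
    have h' : (1 / Real.sqrt 2) ^ 2 ≤ zα ^ 2 :=
      pow_le_pow_left₀ (by positivity) hzα 2
    have hs2 : Real.sqrt 2 > 0 := by positivity
    rw [div_pow, this] at h'
    simpa using h'
  have hle : z ^ 2 / zα ^ 2 ≤ 2 * z ^ 2 := by
    rw [div_le_iff₀ (by positivity)]
    nlinarith
  have hge : 0 ≤ z ^ 2 / zα ^ 2 := by positivity
  rw [abs_of_pos (by positivity : (0:ℝ) < 2 * z ^ 2 + 1), abs_lt]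
  constructor <;> nlinarith
end
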